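/- Let A be a finite nonempty set of points in a Hilbert space and let C = (C_1,...,C_k) and C̄ = (C̄_1,...,C̄_k) be two families of k centers such that ‖C_j − C̄_j‖ ≤ δ for all j, and suppose all points of A, all centers C_j, C̄_j, and all centroids of subsets of A have norm at most γ. Then |f_A(C̄) − f_A(C)| ≤ 4γδ, where f_A(C) = (1/|A|) Σ_{x∈A} min_j ‖x − C_j‖². -/
import Mathlib

lemma sq_dist_perturb {H : Type*} [NormedAddCommGroup H]
    (x c c' : H) (γ δ : ℝ) (hx : ‖x‖ ≤ γ) (hc : ‖c‖ ≤ γ) (hc' : ‖c'‖ ≤ γ)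
    (h : ‖c - c'‖ ≤ δ) : ‖x - c'‖ ^ 2 ≤ ‖x - c‖ ^ 2 + 4 * γ * δ := by
  have h1 : ‖x - c'‖ ≤ ‖x - c‖ + δ := by
    calc ‖x - c'‖ = ‖(x - c) + (c - c')‖ := by rw [sub_add_sub_cancel]
      _ ≤ ‖x - c‖ + ‖c - c'‖ := norm_add_le _ _
      _ ≤ ‖x - c‖ + δ := by linarith
  have h2 : ‖x - c‖ ≤ 2 * γ := le_trans (norm_sub_le _ _) (by linarith)
  have h3 : ‖x - c'‖ ≤ 2 * γ := le_trans (norm_sub_le _ _) (by linarith)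
  have h4 : (0:ℝ) ≤ ‖x - c‖ := norm_nonneg _
  have h5 : (0:ℝ) ≤ ‖x - c'‖ := norm_nonneg _
  rcases le_or_gt ‖x - c'‖ ‖x - c‖ with hle | hlt
  · have hδ : (0:ℝ) ≤ δ := le_trans (norm_nonneg _) h
    nlinarith
  · have key : (‖x - c'‖ - ‖x - c‖) * (‖x - c'‖ + ‖x - c‖) ≤ δ * (4 * γ) :=
      mul_le_mul (by linarith) (by linarith) (by linarith) (by linarith [norm_nonneg (c - c')])
    nlinarith

lemma inf_perturb {H : Type*} [NormedAddCommGroup H] {k : ℕ} (hne : (Finset.univ : Finset (Fin k)).Nonempty)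
    (x : H) (C Cbar : Fin k → H) (γ δ : ℝ) (hx : ‖x‖ ≤ γ)
    (hC : ∀ j, ‖C j‖ ≤ γ) (hCbar : ∀ j, ‖Cbar j‖ ≤ γ)
    (hclose : ∀ j, ‖C j - Cbar j‖ ≤ δ) :
    (Finset.univ.inf' hne fun j => ‖x - Cbar j‖ ^ 2)
      ≤ (Finset.univ.inf' hne fun j => ‖x - C j‖ ^ 2) + 4 * γ * δ := by
  obtain ⟨j₀, -, hj₀⟩ := Finset.exists_mem_eq_inf' hne (fun j => ‖x - C j‖ ^ 2)
  rw [hj₀]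
  calc (Finset.univ.inf' hne fun j => ‖x - Cbar j‖ ^ 2) ≤ ‖x - Cbar j₀‖ ^ 2 :=
        Finset.inf'_le _ (Finset.mem_univ _)
    _ ≤ ‖x - C j₀‖ ^ 2 + 4 * γ * δ :=
        sq_dist_perturb x (C j₀) (Cbar j₀) γ δ hx (hC j₀) (hCbar j₀) (hclose j₀)

theorem kmeans_objective_center_perturbation
    {H : Type*} [NormedAddCommGroup H] [InnerProductSpace ℝ H]
    {ι : Type*} (A : Finset ι) (hA : A.Nonempty) (a : ι → H)
    (k : ℕ) (hk : 0 < k) (C Cbar : Fin k → H) (γ δ : ℝ)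
    (hγ : 0 ≤ γ) (hδ : 0 ≤ δ)
    (ha : ∀ x ∈ A, ‖a x‖ ≤ γ)
    (hC : ∀ j, ‖C j‖ ≤ γ) (hCbar : ∀ j, ‖Cbar j‖ ≤ γ)
    (hclose : ∀ j, ‖C j - Cbar j‖ ≤ δ) :
    |(A.card : ℝ)⁻¹ * ∑ x ∈ A,
        (Finset.univ.inf' (Finset.univ_nonempty_iff.mpr (Fin.pos_iff_nonempty.mp hk))
          fun j => ‖a x - Cbar j‖ ^ 2)
      - (A.card : ℝ)⁻¹ * ∑ x ∈ A,
        (Finset.univ.inf' (Finset.univ_nonempty_iff.mpr (Fin.pos_iff_nonempty.mp hk))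
          fun j => ‖a x - C j‖ ^ 2)|
      ≤ 4 * γ * δ := by
  set hne := Finset.univ_nonempty_iff.mpr (Fin.pos_iff_nonempty.mp hk)
  have hcard : (0:ℝ) < A.card := by exact_mod_cast Finset.card_pos.mpr hA
  rw [← mul_sub, ← Finset.sum_sub_distrib, abs_mul, abs_of_pos (inv_pos.mpr hcard)]
  have hbound : |∑ x ∈ A, ((Finset.univ.inf' hne fun j => ‖a x - Cbar j‖ ^ 2)
      - (Finset.univ.inf' hne fun j => ‖a x - C j‖ ^ 2))| ≤ A.card * (4 * γ * δ) := by
    calc _ ≤ ∑ x ∈ A, |(Finset.univ.inf' hne fun j => ‖a x - Cbar j‖ ^ 2)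
        - (Finset.univ.inf' hne fun j => ‖a x - C j‖ ^ 2)| := Finset.abs_sum_le_sum_abs _ _
      _ ≤ ∑ _x ∈ A, (4 * γ * δ) := by
          apply Finset.sum_le_sum
          intro x hx
          rw [abs_sub_le_iff]
          constructor
          · linarith [inf_perturb hne (a x) C Cbar γ δ (ha x hx) hC hCbar hclose]
          · have hclose' : ∀ j, ‖Cbar j - C j‖ ≤ δ := fun j => by
              rw [norm_sub_rev]; exact hclose j
            linarith [inf_perturb hne (a x) Cbar C γ δ (ha x hx) hCbar hC hclose']
      _ = A.card * (4 * γ * δ) := by rw [Finset.sum_const, nsmul_eq_mul]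
  calc (A.card : ℝ)⁻¹ * |_| ≤ (A.card : ℝ)⁻¹ * (A.card * (4 * γ * δ)) := by
        exact mul_le_mul_of_nonneg_left hbound (by positivity)
    _ = 4 * γ * δ := by field_simp
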